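/- arXiv:2605.18633 — 6 statements merged into one kernel-verified Lean document; each statement's English description precedes it below -/
import Mathlib

section
/- Let p ≥ 2 and K ≥ 1. Let U^(1), …, U^(K) ∈ ℝ^{p×p} each satisfy the acyclicity condition, let w₁, …, w_K be nonnegative reals with Σ_{k=1}^K w_k = 1, and let c ∈ [1 − 1/p, 1]. Define the matrix U ∈ ℝ^{p×p} entrywise by: U_{ij} = Σ_{k=1}^K w_k U^{(k)}_{ij} if Σ_{k=1}^K w_k·1[U^{(k)}_{ij} ≠ 0] > c, and U_{ij} = 0 if Σ_{k=1}^K w_k·1[U^{(k)}_{ij} ≠ 0] ≤ c. Then U satisfies the acyclicity condition. -/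
open scoped Classical

/-- A matrix `U : ℝ^{p×p}` satisfies the acyclicity condition if for every
`L ∈ {2,…,p}` and all indices `j₁,…,j_L ∈ [p]` (with `j_{L+1} := j₁`),
`Σ_{t=1}^L 1[U_{j_t j_{t+1}} ≠ 0] ≤ L − 1`. -/
def MatrixAcyclic (p : ℕ) (U : Matrix (Fin p) (Fin p) ℝ) : Prop :=
  ∀ L : ℕ, 2 ≤ L → L ≤ p → ∀ j : ℕ → Fin p,
    (∑ t ∈ Finset.range L, if U (j t) (j ((t + 1) % L)) ≠ 0 then 1 else 0) ≤ L - 1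

theorem daggr_matrix_aggregation_acyclic
    (p K : ℕ) (hp : 2 ≤ p) (hK : 1 ≤ K)
    (Us : Fin K → Matrix (Fin p) (Fin p) ℝ)
    (hUs : ∀ k, MatrixAcyclic p (Us k))
    (w : Fin K → ℝ) (hw : ∀ k, 0 ≤ w k) (hwsum : ∑ k, w k = 1)
    (c : ℝ) (hc : 1 - 1 / (p : ℝ) ≤ c) (hc' : c ≤ 1)
    (U : Matrix (Fin p) (Fin p) ℝ)
    (hU : ∀ i j, U i j =
      if c < ∑ k, w k * (if Us k i j ≠ 0 then (1 : ℝ) else 0)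
      then ∑ k, w k * Us k i j else 0) :
    MatrixAcyclic p U := by
  intro L hL2 hLp j
  by_contra hcon
  push_neg at hcon
  -- hcon : L - 1 < ∑ t in range L, ite ...
  -- Step 1: every edge of the cycle is nonzero in U
  have hall : ∀ t ∈ Finset.range L, U (j t) (j ((t + 1) % L)) ≠ 0 := by
    intro t ht hzero
    have hsplit := Finset.add_sum_erase (Finset.range L)
      (fun t => if U (j t) (j ((t + 1) % L)) ≠ 0 then 1 else 0) ht
    beta_reduce at hsplit
    have hterm : (if U (j t) (j ((t + 1) % L)) ≠ 0 then 1 else 0) = 0 := by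
      simp [hzero]
    have hle : (∑ s ∈ (Finset.range L).erase t,
        if U (j s) (j ((s + 1) % L)) ≠ 0 then 1 else 0) ≤ L - 1 := by
      calc (∑ s ∈ (Finset.range L).erase t,
          if U (j s) (j ((s + 1) % L)) ≠ 0 then 1 else 0)
          ≤ ∑ s ∈ (Finset.range L).erase t, 1 := by
            apply Finset.sum_le_sum
            intro s hs
            split <;> simp
        _ = L - 1 := by
            rw [Finset.sum_const, smul_eq_mul, mul_one,
              Finset.card_erase_of_mem ht, Finset.card_range]
    omega
  -- Step 2: for each edge, the weighted indicator sum exceeds c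
  have hcond : ∀ t ∈ Finset.range L,
      c < ∑ k, w k * (if Us k (j t) (j ((t + 1) % L)) ≠ 0 then (1 : ℝ) else 0) := by
    intro t ht
    have h1 := hall t ht
    rw [hU] at h1
    by_contra hnot
    rw [if_neg hnot] at h1
    exact h1 rfl
  have hLpos : 0 < (L : ℝ) := by positivity
  -- Step 3: sum over t
  have key1 : (L : ℝ) * c < ∑ t ∈ Finset.range L,
      ∑ k, w k * (if Us k (j t) (j ((t + 1) % L)) ≠ 0 then (1 : ℝ) else 0) := by
    have := Finset.sum_lt_sum_of_nonempty (s := Finset.range L)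
      (f := fun _ => c)
      (g := fun t => ∑ k, w k * (if Us k (j t) (j ((t + 1) % L)) ≠ 0 then (1 : ℝ) else 0))
      (by simp; omega) hcond
    simpa [Finset.sum_const, Finset.card_range, mul_comm] using this
  -- Step 4: the double sum is at most L - 1 by acyclicity of each Us k
  have key2 : (∑ t ∈ Finset.range L,
      ∑ k, w k * (if Us k (j t) (j ((t + 1) % L)) ≠ 0 then (1 : ℝ) else 0))
      ≤ (L : ℝ) - 1 := by
    rw [Finset.sum_comm]
    have hk : ∀ k : Fin K,
        (∑ t ∈ Finset.range L, w k * (if Us k (j t) (j ((t + 1) % L)) ≠ 0 then (1 : ℝ) else 0))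
        ≤ w k * ((L : ℝ) - 1) := by
      intro k
      rw [← Finset.mul_sum]
      apply mul_le_mul_of_nonneg_left _ (hw k)
      have hnat := hUs k L hL2 hLp j
      have hcast : (∑ t ∈ Finset.range L,
          (if Us k (j t) (j ((t + 1) % L)) ≠ 0 then (1 : ℝ) else 0))
          = ((∑ t ∈ Finset.range L,
              if Us k (j t) (j ((t + 1) % L)) ≠ 0 then 1 else 0 : ℕ) : ℝ) := by
        push_cast [apply_ite (Nat.cast : ℕ → ℝ)]
        rfl
      rw [hcast]
      have : ((∑ t ∈ Finset.range L,
          if Us k (j t) (j ((t + 1) % L)) ≠ 0 then 1 else 0 : ℕ) : ℝ) ≤ ((L - 1 : ℕ) : ℝ) := by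
        exact_mod_cast hnat
      calc _ ≤ ((L - 1 : ℕ) : ℝ) := this
        _ ≤ (L : ℝ) - 1 := by
            have : ((L - 1 : ℕ) : ℝ) = (L : ℝ) - 1 := by
              have : 1 ≤ L := by omega
              push_cast [this]
              ring
            linarith [this.le]
    calc (∑ k, ∑ t ∈ Finset.range L,
        w k * (if Us k (j t) (j ((t + 1) % L)) ≠ 0 then (1 : ℝ) else 0))
        ≤ ∑ k, w k * ((L : ℝ) - 1) := Finset.sum_le_sum fun k _ => hk k
      _ = (L : ℝ) - 1 := by rw [← Finset.sum_mul, hwsum, one_mul]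
  -- Step 5: contradiction
  have hLc : (L : ℝ) - 1 ≤ (L : ℝ) * c := by
    have hppos : 0 < (p : ℝ) := by positivity
    have hLp' : (L : ℝ) ≤ (p : ℝ) := by exact_mod_cast hLp
    have h1 : (L : ℝ) * (1 - 1 / p) ≤ (L : ℝ) * c :=
      mul_le_mul_of_nonneg_left hc (le_of_lt hLpos)
    have h2 : (L : ℝ) - 1 ≤ (L : ℝ) * (1 - 1 / p) := by
      have : (L : ℝ) / p ≤ 1 := by
        rw [div_le_one hppos]; exact hLp'
      have hexp : (L : ℝ) * (1 - 1 / p) = (L : ℝ) - (L : ℝ) / p := by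
        field_simp
      rw [hexp]; linarith
    linarith
  linarith
end

section
/- Let p ≥ 2 and K ≥ 1. Let E^(1), …, E^(K) ⊆ [p]×[p] each satisfy the acyclicity condition, let w₁, …, w_K be nonnegative reals with Σ_{k=1}^K w_k = 1, and let c ∈ [1 − 1/p, 1]. Then the thresholded edge set {(i,j) ∈ [p]×[p] : s_{ij} > c}, where s_{ij} = Σ_{k=1}^K w_k·1[(i,j) ∈ E^(k)], also satisfies the acyclicity condition. -/
open scoped Classical

/-- An edge set `E ⊆ [p]×[p]` satisfies the acyclicity condition if for every
`L ∈ {2,…,p}` and all indices `j₁,…,j_L ∈ [p]` (with `j_{L+1} := j₁`),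
`Σ_{t=1}^L 1[(j_t, j_{t+1}) ∈ E] ≤ L − 1`. -/
def EdgeSetAcyclic (p : ℕ) (E : Finset (Fin p × Fin p)) : Prop :=
  ∀ L : ℕ, 2 ≤ L → L ≤ p → ∀ j : ℕ → Fin p,
    (∑ t ∈ Finset.range L, if (j t, j ((t + 1) % L)) ∈ E then 1 else 0) ≤ L - 1

theorem daggr_thresholded_edge_set_acyclic
    (p K : ℕ) (hp : 2 ≤ p) (hK : 1 ≤ K)
    (E : Fin K → Finset (Fin p × Fin p))
    (hE : ∀ k, EdgeSetAcyclic p (E k))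
    (w : Fin K → ℝ) (hw : ∀ k, 0 ≤ w k) (hwsum : ∑ k, w k = 1)
    (c : ℝ) (hc : 1 - 1 / (p : ℝ) ≤ c) (hc' : c ≤ 1) :
    EdgeSetAcyclic p (Finset.univ.filter fun e =>
      c < ∑ k, w k * (if e ∈ E k then (1 : ℝ) else 0)) := by
  intro L hL2 hLp j
  by_contra h
  push_neg at h
  set P : ℕ → Prop := fun t =>
    c < ∑ k, w k * (if (j t, j ((t + 1) % L)) ∈ E k then (1 : ℝ) else 0) with hP
  have hsum : (∑ t ∈ Finset.range L,
      if (j t, j ((t + 1) % L)) ∈ (Finset.univ.filter fun e =>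
        c < ∑ k, w k * (if e ∈ E k then (1 : ℝ) else 0)) then 1 else 0)
      = ((Finset.range L).filter P).card := by
    rw [Finset.card_filter]
    refine Finset.sum_congr rfl fun t _ => ?_
    simp [hP]
  rw [hsum] at h
  have hcardle : ((Finset.range L).filter P).card ≤ L := by
    simpa using Finset.card_filter_le (Finset.range L) P
  have hcard : L ≤ ((Finset.range L).filter P).card := by omega
  have hfeq : (Finset.range L).filter P = Finset.range L :=
    Finset.eq_of_subset_of_card_le (Finset.filter_subset _ _) (by simpa using hcard)
  have hall : ∀ t ∈ Finset.range L, P t := by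
    intro t ht
    have : t ∈ (Finset.range L).filter P := by rw [hfeq]; exact ht
    exact (Finset.mem_filter.mp this).2
  have hLpos : (0:ℝ) < L := by positivity
  have h1 : (L : ℝ) * c < ∑ t ∈ Finset.range L,
      ∑ k, w k * (if (j t, j ((t + 1) % L)) ∈ E k then (1 : ℝ) else 0) := by
    have := Finset.sum_lt_sum_of_nonempty (s := Finset.range L)
      (f := fun _ => c)
      (g := fun t => ∑ k, w k * (if (j t, j ((t + 1) % L)) ∈ E k then (1 : ℝ) else 0))
      (by simp; omega) (fun t ht => hall t ht)
    simpa [mul_comm] using this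
  have h2 : (∑ t ∈ Finset.range L,
      ∑ k, w k * (if (j t, j ((t + 1) % L)) ∈ E k then (1 : ℝ) else 0))
      ≤ (L : ℝ) - 1 := by
    rw [Finset.sum_comm]
    have hk : ∀ k : Fin K,
        (∑ t ∈ Finset.range L, w k * (if (j t, j ((t + 1) % L)) ∈ E k then (1 : ℝ) else 0))
        ≤ w k * ((L : ℝ) - 1) := by
      intro k
      rw [← Finset.mul_sum]
      refine mul_le_mul_of_nonneg_left ?_ (hw k)
      have hb := hE k L hL2 hLp j
      have hcast : (∑ t ∈ Finset.range L,
          if (j t, j ((t + 1) % L)) ∈ E k then (1 : ℝ) else 0)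
          = ((∑ t ∈ Finset.range L,
            if (j t, j ((t + 1) % L)) ∈ E k then 1 else 0 : ℕ) : ℝ) := by
        push_cast [apply_ite (Nat.cast : ℕ → ℝ)]
        rfl
      rw [hcast]
      have : ((∑ t ∈ Finset.range L,
          if (j t, j ((t + 1) % L)) ∈ E k then 1 else 0 : ℕ) : ℝ) ≤ ((L - 1 : ℕ) : ℝ) := by
        exact_mod_cast hb
      calc ((∑ t ∈ Finset.range L,
          if (j t, j ((t + 1) % L)) ∈ E k then 1 else 0 : ℕ) : ℝ) ≤ ((L - 1 : ℕ) : ℝ) := this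
        _ = (L : ℝ) - 1 := by
            rw [Nat.cast_sub (by omega)]; norm_num
    calc (∑ k, ∑ t ∈ Finset.range L,
        w k * (if (j t, j ((t + 1) % L)) ∈ E k then (1 : ℝ) else 0))
        ≤ ∑ k, w k * ((L : ℝ) - 1) := Finset.sum_le_sum fun k _ => hk k
      _ = (L : ℝ) - 1 := by rw [← Finset.sum_mul, hwsum, one_mul]
  have hmain : (L : ℝ) * c < (L : ℝ) - 1 := lt_of_lt_of_le h1 h2
  have hp0 : (0:ℝ) < p := by positivity
  have hLp' : (L : ℝ) ≤ p := by exact_mod_cast hLp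
  have hdiv : (L : ℝ) / p ≤ 1 := by rw [div_le_one hp0]; exact hLp'
  have hmul : (L : ℝ) * (1 - 1 / p) ≤ (L : ℝ) * c :=
    mul_le_mul_of_nonneg_left hc (le_of_lt hLpos)
  have hexp : (L : ℝ) * (1 - 1 / p) = (L : ℝ) - (L : ℝ) / p := by ring
  linarith
end

section
/- Let p ≥ 1 and K ≥ 1, let E^(1), …, E^(K) ⊆ [p]×[p] and E* ⊆ [p]×[p] be edge sets, let w₁, …, w_K be nonnegative reals with Σ_{k=1}^K w_k = 1, and let c ∈ (0,1). Let E_c := {(i,j) ∈ [p]×[p] : s_{ij} > c} be the thresholded edge set. Then |E_c ∇ E*| ≤ (1 / min(c, 1−c)) · Σ_{k=1}^K w_k · |E^(k) ∇ E*|. -/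
theorem daggr_thresholded_symmdiff_bound
    (p K : ℕ) (hp : 1 ≤ p) (hK : 1 ≤ K)
    (E : Fin K → Finset (Fin p × Fin p)) (Estar : Finset (Fin p × Fin p))
    (w : Fin K → ℝ) (hw : ∀ k, 0 ≤ w k) (hwsum : ∑ k, w k = 1)
    (c : ℝ) (hc0 : 0 < c) (hc1 : c < 1) :
    ((symmDiff (Finset.univ.filter fun e =>
          c < ∑ k, w k * (if e ∈ E k then (1 : ℝ) else 0)) Estar).card : ℝ)
      ≤ (1 / min c (1 - c)) * ∑ k, w k * ((symmDiff (E k) Estar).card : ℝ) := by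
  have hm0 : 0 < min c (1 - c) := lt_min hc0 (by linarith)
  rw [one_div, ← div_eq_inv_mul, le_div_iff₀ hm0]
  set SD := symmDiff (Finset.univ.filter fun e =>
      c < ∑ k, w k * (if e ∈ E k then (1 : ℝ) else 0)) Estar with hSD
  have key : ∀ e ∈ SD,
      min c (1 - c) ≤ ∑ k, w k * (if e ∈ symmDiff (E k) Estar then (1:ℝ) else 0) := by
    intro e he
    rw [hSD, Finset.mem_symmDiff] at he
    rcases he with ⟨h1, h2⟩ | ⟨h1, h2⟩
    · simp only [Finset.mem_filter] at h1
      calc min c (1 - c) ≤ c := min_le_left _ _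
        _ ≤ ∑ k, w k * (if e ∈ E k then (1:ℝ) else 0) := le_of_lt h1.2
        _ ≤ _ := by
            apply Finset.sum_le_sum
            intro k _
            by_cases hk : e ∈ E k
            · simp [hk, Finset.mem_symmDiff, h2]
            · rw [if_neg hk, mul_zero]
              split_ifs <;> simp [hw k]
    · simp only [Finset.mem_filter, Finset.mem_univ, true_and, not_lt] at h2
      have hstep : ∑ k, w k * (if e ∈ E k then (0:ℝ) else 1)
          ≤ ∑ k, w k * (if e ∈ symmDiff (E k) Estar then (1:ℝ) else 0) := by
        apply Finset.sum_le_sum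
        intro k _
        by_cases hk : e ∈ E k
        · rw [if_pos hk, mul_zero]
          split_ifs <;> simp [hw k]
        · simp [hk, Finset.mem_symmDiff, h1]
      have hsum : ∑ k, w k * (if e ∈ E k then (0:ℝ) else 1)
          = 1 - ∑ k, w k * (if e ∈ E k then (1:ℝ) else 0) := by
        have hterm : ∀ k : Fin K, w k * (if e ∈ E k then (0:ℝ) else 1)
            = w k - w k * (if e ∈ E k then (1:ℝ) else 0) := by
          intro k
          by_cases hk : e ∈ E k <;> simp [hk]
        rw [Finset.sum_congr rfl fun k _ => hterm k, Finset.sum_sub_distrib, hwsum]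
      have hmin : min c (1 - c) ≤ 1 - c := min_le_right _ _
      rw [hsum] at hstep
      linarith
  calc (SD.card : ℝ) * min c (1 - c) = ∑ _e ∈ SD, min c (1 - c) := by
        rw [Finset.sum_const, nsmul_eq_mul]
    _ ≤ ∑ e ∈ SD, ∑ k, w k * (if e ∈ symmDiff (E k) Estar then (1:ℝ) else 0) :=
        Finset.sum_le_sum key
    _ ≤ ∑ e ∈ Finset.univ, ∑ k, w k * (if e ∈ symmDiff (E k) Estar then (1:ℝ) else 0) := by
        apply Finset.sum_le_sum_of_subset_of_nonneg (Finset.subset_univ _)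
        intro e _ _
        apply Finset.sum_nonneg
        intro k _
        by_cases hk : e ∈ symmDiff (E k) Estar <;> simp [hk, hw k]
    _ = ∑ k, w k * ((symmDiff (E k) Estar).card : ℝ) := by
        rw [Finset.sum_comm]
        apply Finset.sum_congr rfl
        intro k _
        rw [← Finset.mul_sum]
        congr 1
        rw [Finset.sum_ite_mem, Finset.univ_inter, Finset.sum_const, nsmul_eq_mul, mul_one]
end

section
/- In the random candidate-DAG setting, assume the weight sequence is strongly consistent, i.e., the real random variables Σ_{k=1}^{K_n} w^n_k · |E^{(k)}_n ∇ E*_n| converge to 0 in probability as n → ∞. Then min_{(i,j) ∈ E*_n} s^n_{ij} → 1 in probability and max_{(i,j) ∈ ([p_n]×[p_n]) \ E*_n} s^n_{ij} → 0 in probability as n → ∞ (with the convention that the maximum over an empty set equals 0). -/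
open MeasureTheory Filter

/-- Real random variables `Z n` converge to `z` in probability:
for every `ε > 0`, `P(|Z_n − z| > ε) → 0` as `n → ∞`. -/
def TendstoInProb {Ω : Type*} [MeasurableSpace Ω] (P : Measure Ω)
    (Z : ℕ → Ω → ℝ) (z : ℝ) : Prop :=
  ∀ ε : ℝ, 0 < ε → Tendsto (fun n => P {ω | ε < |Z n ω - z|}) atTop (nhds 0)

/-!
An edge whose membership in a candidate `E⁽ᵏ⁾` disagrees with its membership in `E*` lies in
`E⁽ᵏ⁾ ∇ E*`, so averaging over the weights bounds the deviation of every score `s_e` from the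
indicator of `e ∈ E*` by `Z = ∑ₖ wₖ |E⁽ᵏ⁾ ∇ E*|`. The minimum over `E*` and the maximum over its
complement are attained at some edge, hence lie within `Z` of `1` and `0` respectively, and
`Z → 0` in probability.
-/

theorem TendstoInProb.of_abs_sub_le {Ω : Type*} [MeasurableSpace Ω] {P : Measure Ω}
    {Y Z : ℕ → Ω → ℝ} {y z : ℝ} (hZ : TendstoInProb P Z z)
    (hle : ∀ n ω, |Y n ω - y| ≤ |Z n ω - z|) : TendstoInProb P Y y := fun ε hε =>
  tendsto_of_tendsto_of_tendsto_of_le_of_le tendsto_const_nhds (hZ ε hε) (fun _ => zero_le)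
    fun n => measure_mono fun ω (hω : ε < |Y n ω - y|) => hω.trans_le (hle n ω)

theorem Finset.abs_inf'_sub_le {α : Type*} {s : Finset α} (hs : s.Nonempty) {f : α → ℝ}
    {c b : ℝ} (h : ∀ e ∈ s, |f e - c| ≤ b) : |s.inf' hs f - c| ≤ b := by
  obtain ⟨e, he, heq⟩ := s.exists_mem_eq_inf' hs f
  exact heq ▸ h e he

theorem Finset.abs_sup'_sub_le {α : Type*} {s : Finset α} (hs : s.Nonempty) {f : α → ℝ}
    {c b : ℝ} (h : ∀ e ∈ s, |f e - c| ≤ b) : |s.sup' hs f - c| ≤ b := by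
  obtain ⟨e, he, heq⟩ := s.exists_mem_eq_sup' hs f
  exact heq ▸ h e he

section WeightedMembership

variable {ι α : Type*} [Fintype ι] [DecidableEq α]

theorem abs_indicator_sub_indicator_le_card_symmDiff (A S : Finset α) (e : α) :
    |(if e ∈ A then (1 : ℝ) else 0) - (if e ∈ S then 1 else 0)| ≤ (symmDiff A S).card := by
  by_cases hAS : e ∈ A ↔ e ∈ S
  · simp [hAS]
  · have he : e ∈ symmDiff A S := by rw [Finset.mem_symmDiff]; tauto
    have hcard : (1 : ℝ) ≤ (symmDiff A S).card := by exact_mod_cast Finset.card_pos.mpr ⟨e, he⟩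
    by_cases hA : e ∈ A <;> simp_all

theorem abs_weighted_indicator_sub_indicator_le {w : ι → ℝ} (hw0 : ∀ k, 0 ≤ w k)
    (hw1 : ∑ k, w k = 1) (A : ι → Finset α) (S : Finset α) (e : α) :
    |∑ k, w k * (if e ∈ A k then (1 : ℝ) else 0) - (if e ∈ S then 1 else 0)| ≤
      ∑ k, w k * ((symmDiff (A k) S).card : ℝ) := by
  have hsplit : ∑ k, w k * (if e ∈ A k then (1 : ℝ) else 0) - (if e ∈ S then 1 else 0) =
      ∑ k, w k * ((if e ∈ A k then (1 : ℝ) else 0) - (if e ∈ S then 1 else 0)) := by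
    simp only [mul_sub, Finset.sum_sub_distrib, ← Finset.sum_mul, hw1, one_mul]
  calc _ = |∑ k, w k * ((if e ∈ A k then (1 : ℝ) else 0) - (if e ∈ S then 1 else 0))| := by
          rw [hsplit]
    _ ≤ ∑ k, |w k * ((if e ∈ A k then (1 : ℝ) else 0) - (if e ∈ S then 1 else 0))| :=
          Finset.abs_sum_le_sum_abs _ _
    _ ≤ ∑ k, w k * ((symmDiff (A k) S).card : ℝ) := Finset.sum_le_sum fun k _ => by
          rw [abs_mul, abs_of_nonneg (hw0 k)]
          exact mul_le_mul_of_nonneg_left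
            (abs_indicator_sub_indicator_le_card_symmDiff (A k) S e) (hw0 k)

end WeightedMembership

theorem daggr_strong_consistency_importance_scores_general
    {Ω : Type*} [MeasurableSpace Ω] (P : Measure Ω)
    (p K : ℕ → ℕ)
    (w : (n : ℕ) → Fin (K n) → Ω → ℝ)
    (hw0 : ∀ n k ω, 0 ≤ w n k ω)
    (hw1 : ∀ n ω, ∑ k, w n k ω = 1)
    (E : (n : ℕ) → Fin (K n) → Ω → Finset (Fin (p n) × Fin (p n)))
    (Estar : (n : ℕ) → Finset (Fin (p n) × Fin (p n)))
    (hEstar : ∀ n, (Estar n).Nonempty)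
    (hstrong : TendstoInProb P (fun n ω =>
      ∑ k, w n k ω * ((symmDiff (E n k ω) (Estar n)).card : ℝ)) 0) :
    TendstoInProb P (fun n ω =>
      (Estar n).inf' (hEstar n) (fun e =>
        ∑ k, w n k ω * (if e ∈ E n k ω then (1 : ℝ) else 0))) 1 ∧
    TendstoInProb P (fun n ω =>
      if h : (Finset.univ \ Estar n).Nonempty then
        (Finset.univ \ Estar n).sup' h (fun e =>
          ∑ k, w n k ω * (if e ∈ E n k ω then (1 : ℝ) else 0))
      else 0) 0 := by
  have hscore n ω e := (abs_weighted_indicator_sub_indicator_le (hw0 n · ω) (hw1 n ω)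
    (fun k => E n k ω) (Estar n) e).trans (le_abs_self _)
  refine ⟨hstrong.of_abs_sub_le fun n ω => ?_, hstrong.of_abs_sub_le fun n ω => ?_⟩
  · refine Finset.abs_inf'_sub_le _ fun e he => ?_
    simpa [he] using hscore n ω e
  · split_ifs with h
    · refine Finset.abs_sup'_sub_le h fun e he => ?_
      simpa [(Finset.mem_sdiff.mp he).2] using hscore n ω e
    · simp

theorem daggr_strong_consistency_importance_scores
    {Ω : Type*} [MeasurableSpace Ω] (P : Measure Ω) [IsProbabilityMeasure P]
    (p K : ℕ → ℕ) (hp : ∀ n, 1 ≤ p n) (hK : ∀ n, 1 ≤ K n)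
    (w : (n : ℕ) → Fin (K n) → Ω → ℝ)
    (hw0 : ∀ n k ω, 0 ≤ w n k ω)
    (hw1 : ∀ n ω, ∑ k, w n k ω = 1)
    (hwmeas : ∀ n k, Measurable (w n k))
    (E : (n : ℕ) → Fin (K n) → Ω → Finset (Fin (p n) × Fin (p n)))
    (hEmeas : ∀ n k (e : Fin (p n) × Fin (p n)), MeasurableSet {ω | e ∈ E n k ω})
    (Estar : (n : ℕ) → Finset (Fin (p n) × Fin (p n)))
    (hEstar : ∀ n, (Estar n).Nonempty)
    (hstrong : TendstoInProb P (fun n ω =>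
      ∑ k, w n k ω * ((symmDiff (E n k ω) (Estar n)).card : ℝ)) 0) :
    TendstoInProb P (fun n ω =>
      (Estar n).inf' (hEstar n) (fun e =>
        ∑ k, w n k ω * (if e ∈ E n k ω then (1 : ℝ) else 0))) 1 ∧
    TendstoInProb P (fun n ω =>
      if h : (Finset.univ \ Estar n).Nonempty then
        (Finset.univ \ Estar n).sup' h (fun e =>
          ∑ k, w n k ω * (if e ∈ E n k ω then (1 : ℝ) else 0))
      else 0) 0 :=
  daggr_strong_consistency_importance_scores_general P p K w hw0 hw1 E Estar hEstar hstrong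
end

section
/- In the random candidate-DAG setting, let c ∈ (0,1) and assume the weight sequence is weakly consistent, i.e., the real random variables (Σ_{k=1}^{K_n} w^n_k · |E^{(k)}_n ∇ E*_n|) / |E*_n| converge to 0 in probability as n → ∞. Then |{(i,j) ∈ E*_n : s^n_{ij} ≤ c}| / |E*_n| → 0 in probability and |{(i,j) ∈ ([p_n]×[p_n]) \ E*_n : s^n_{ij} > c}| / |E*_n| → 0 in probability as n → ∞. -/
/-!
Write `s(e)` for the importance score of an edge `e`. The weighted error
`∑ₖ wₖ |Eₖ ∆ E*|` is the sum over all edges of the weight of the candidates that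
misclassify `e`, which is `1 - s(e)` for a true edge and `s(e)` for a false one.
A true edge with `s(e) ≤ c` therefore contributes at least `1 - c`, a false edge with
`s(e) > c` at least `c`, so the normalized counts of such edges are bounded by the
normalized weighted error divided by `1 - c`, resp. `c`, and inherit its convergence
to `0` in probability.
-/

open MeasureTheory Filter

section EdgeScore

open Finset

variable {α ι : Type*} [DecidableEq α] [Fintype ι]

def edgeScore (w : ι → ℝ) (E : ι → Finset α) (e : α) : ℝ :=
  ∑ k, w k * if e ∈ E k then 1 else 0

variable {w : ι → ℝ} {E : ι → Finset α}

lemma edgeScore_nonneg (hw0 : ∀ k, 0 ≤ w k) (e : α) : 0 ≤ edgeScore w E e :=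
  sum_nonneg fun k _ => mul_nonneg (hw0 k) (by positivity)

lemma sum_edgeScore [Fintype α] : ∑ e, edgeScore w E e = ∑ k, w k * #(E k) := by
  unfold edgeScore
  rw [sum_comm]
  refine sum_congr rfl fun k _ => ?_
  rw [← mul_sum, sum_boole, filter_mem_eq_inter, univ_inter]

lemma edgeScore_symmDiff_of_mem (hw1 : ∑ k, w k = 1) {S : Finset α} {e : α} (he : e ∈ S) :
    edgeScore w (fun k => symmDiff (E k) S) e = 1 - edgeScore w E e := by
  unfold edgeScore
  rw [eq_sub_iff_add_eq, ← sum_add_distrib]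
  conv_rhs => rw [← hw1]
  refine sum_congr rfl fun k _ => ?_
  by_cases h : e ∈ E k <;> simp [mem_symmDiff, he, h]

lemma edgeScore_symmDiff_of_notMem {S : Finset α} {e : α} (he : e ∉ S) :
    edgeScore w (fun k => symmDiff (E k) S) e = edgeScore w E e := by
  unfold edgeScore
  refine sum_congr rfl fun k _ => ?_
  simp [mem_symmDiff, he]

end EdgeScore

section Counting

open Finset

lemma Finset.card_filter_mul_le_sum {α : Type*} {s : Finset α} {P : α → Prop} [DecidablePred P]
    {f : α → ℝ} {t : ℝ} (hf : ∀ e ∈ s, 0 ≤ f e) (hP : ∀ e ∈ s, P e → t ≤ f e) :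
    #{e ∈ s | P e} * t ≤ ∑ e ∈ s, f e :=
  calc (#{e ∈ s | P e} : ℝ) * t = #{e ∈ s | P e} • t := (nsmul_eq_mul _ _).symm
    _ ≤ ∑ e ∈ s with P e, f e := card_nsmul_le_sum _ _ _ fun e he =>
          hP e (mem_filter.1 he).1 (mem_filter.1 he).2
    _ ≤ ∑ e ∈ s, f e := sum_le_sum_of_subset_of_nonneg (filter_subset _ _) fun e he _ => hf e he

variable {α ι : Type*} [Fintype α] [DecidableEq α] [Fintype ι]
  {w : ι → ℝ} {E : ι → Finset α} (hw0 : ∀ k, 0 ≤ w k) (S : Finset α) (c : ℝ)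
include hw0

lemma card_filter_edgeScore_le_mul_le (hw1 : ∑ k, w k = 1) :
    #{e ∈ S | edgeScore w E e ≤ c} * (1 - c) ≤ ∑ k, w k * #(symmDiff (E k) S) := by
  rw [← sum_edgeScore]
  refine (card_filter_mul_le_sum (fun e _ => edgeScore_nonneg hw0 e) fun e he hc => ?_).trans
    (sum_le_univ_sum_of_nonneg fun e => edgeScore_nonneg hw0 e)
  rw [edgeScore_symmDiff_of_mem hw1 he]
  linarith

lemma card_filter_lt_edgeScore_mul_le :
    #{e ∈ univ \ S | c < edgeScore w E e} * c ≤ ∑ k, w k * #(symmDiff (E k) S) := by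
  rw [← sum_edgeScore]
  refine (card_filter_mul_le_sum (fun e _ => edgeScore_nonneg hw0 e) fun e he hc => ?_).trans
    (sum_le_univ_sum_of_nonneg fun e => edgeScore_nonneg hw0 e)
  rw [edgeScore_symmDiff_of_notMem (mem_sdiff.1 he).2]
  exact hc.le

end Counting

lemma TendstoInProb.of_mul_le {Ω : Type*} [MeasurableSpace Ω] {P : Measure Ω}
    {Z W : ℕ → Ω → ℝ} {t : ℝ} (hW : TendstoInProb P W 0) (ht : 0 < t)
    (hZ : ∀ n ω, 0 ≤ Z n ω) (hle : ∀ n ω, Z n ω * t ≤ W n ω) : TendstoInProb P Z 0 := by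
  intro ε hε
  refine tendsto_of_tendsto_of_tendsto_of_le_of_le tendsto_const_nhds (hW (ε * t) (by positivity))
    (fun n => zero_le) fun n => measure_mono fun ω hω => ?_
  simp only [Set.mem_ofPred_eq, sub_zero, abs_of_nonneg (hZ n ω)] at hω ⊢
  calc ε * t < Z n ω * t := by gcongr
    _ ≤ W n ω := hle n ω
    _ ≤ |W n ω| := le_abs_self _

theorem daggr_weak_consistency_edge_selection_general
    {Ω : Type*} [MeasurableSpace Ω] (P : Measure Ω)
    (p K : ℕ → ℕ)
    (w : (n : ℕ) → Fin (K n) → Ω → ℝ)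
    (hw0 : ∀ n k ω, 0 ≤ w n k ω)
    (hw1 : ∀ n ω, ∑ k, w n k ω = 1)
    (E : (n : ℕ) → Fin (K n) → Ω → Finset (Fin (p n) × Fin (p n)))
    (Estar : (n : ℕ) → Finset (Fin (p n) × Fin (p n)))
    (c : ℝ) (hc0 : 0 < c) (hc1 : c < 1)
    (hweak : TendstoInProb P (fun n ω =>
      (∑ k, w n k ω * ((symmDiff (E n k ω) (Estar n)).card : ℝ))
        / ((Estar n).card : ℝ)) 0) :
    TendstoInProb P (fun n ω =>
      (((Estar n).filter fun e =>
          (∑ k, w n k ω * (if e ∈ E n k ω then (1 : ℝ) else 0)) ≤ c).card : ℝ)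
        / ((Estar n).card : ℝ)) 0 ∧
    TendstoInProb P (fun n ω =>
      (((Finset.univ \ Estar n).filter fun e =>
          c < ∑ k, w n k ω * (if e ∈ E n k ω then (1 : ℝ) else 0)).card : ℝ)
        / ((Estar n).card : ℝ)) 0 := by
  have hN : ∀ n, (0 : ℝ) ≤ (Estar n).card := fun n => Nat.cast_nonneg _
  refine ⟨hweak.of_mul_le (sub_pos.2 hc1) (fun n ω => by positivity) fun n ω => ?_,
    hweak.of_mul_le hc0 (fun n ω => by positivity) fun n ω => ?_⟩
  · rw [div_mul_eq_mul_div]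
    exact div_le_div_of_nonneg_right
      (card_filter_edgeScore_le_mul_le (hw0 n · ω) (Estar n) c (hw1 n ω)) (hN n)
  · rw [div_mul_eq_mul_div]
    exact div_le_div_of_nonneg_right
      (card_filter_lt_edgeScore_mul_le (hw0 n · ω) (Estar n) c) (hN n)

theorem daggr_weak_consistency_edge_selection
    {Ω : Type*} [MeasurableSpace Ω] (P : Measure Ω) [IsProbabilityMeasure P]
    (p K : ℕ → ℕ) (hp : ∀ n, 1 ≤ p n) (hK : ∀ n, 1 ≤ K n)
    (w : (n : ℕ) → Fin (K n) → Ω → ℝ)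
    (hw0 : ∀ n k ω, 0 ≤ w n k ω)
    (hw1 : ∀ n ω, ∑ k, w n k ω = 1)
    (hwmeas : ∀ n k, Measurable (w n k))
    (E : (n : ℕ) → Fin (K n) → Ω → Finset (Fin (p n) × Fin (p n)))
    (hEmeas : ∀ n k (e : Fin (p n) × Fin (p n)), MeasurableSet {ω | e ∈ E n k ω})
    (Estar : (n : ℕ) → Finset (Fin (p n) × Fin (p n)))
    (hEstar : ∀ n, (Estar n).Nonempty)
    (c : ℝ) (hc0 : 0 < c) (hc1 : c < 1)
    (hweak : TendstoInProb P (fun n ω =>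
      (∑ k, w n k ω * ((symmDiff (E n k ω) (Estar n)).card : ℝ))
        / ((Estar n).card : ℝ)) 0) :
    TendstoInProb P (fun n ω =>
      (((Estar n).filter fun e =>
          (∑ k, w n k ω * (if e ∈ E n k ω then (1 : ℝ) else 0)) ≤ c).card : ℝ)
        / ((Estar n).card : ℝ)) 0 ∧
    TendstoInProb P (fun n ω =>
      (((Finset.univ \ Estar n).filter fun e =>
          c < ∑ k, w n k ω * (if e ∈ E n k ω then (1 : ℝ) else 0)).card : ℝ)
        / ((Estar n).card : ℝ)) 0 :=
  daggr_weak_consistency_edge_selection_general P p K w hw0 hw1 E Estar c hc0 hc1 hweak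
end

section
/- In the random candidate-DAG setting, let c ∈ (0,1) and assume the weight sequence is strongly consistent, i.e., the real random variables Σ_{k=1}^{K_n} w^n_k · |E^{(k)}_n ∇ E*_n| converge to 0 in probability as n → ∞. Then the random counts |{(i,j) ∈ E*_n : s^n_{ij} ≤ c}| and |{(i,j) ∈ ([p_n]×[p_n]) \ E*_n : s^n_{ij} > c}| both converge to 0 in probability as n → ∞. -/
open MeasureTheory Filter

/-- Weighted count lower bound: if every element of `S` has weighted symmetric-difference
indicator mass at least `b`, then `b * S.card` is at most the weighted sum of
symmetric-difference cardinalities. -/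
lemma daggr_aux_count {α ι : Type*} [DecidableEq α] [Fintype ι]
    (w : ι → ℝ) (hw0 : ∀ k, 0 ≤ w k) (A : ι → Finset α) (T S : Finset α) (b : ℝ)
    (hb : ∀ e ∈ S, b ≤ ∑ k, w k * (if e ∈ symmDiff (A k) T then (1 : ℝ) else 0)) :
    b * S.card ≤ ∑ k, w k * ((symmDiff (A k) T).card : ℝ) := by
  have h1 : b * S.card = ∑ _e ∈ S, b := by
    rw [Finset.sum_const, nsmul_eq_mul, mul_comm]
  rw [h1]
  calc ∑ e ∈ S, b
      ≤ ∑ e ∈ S, ∑ k, w k * (if e ∈ symmDiff (A k) T then (1 : ℝ) else 0) :=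
        Finset.sum_le_sum hb
    _ = ∑ k, ∑ e ∈ S, w k * (if e ∈ symmDiff (A k) T then (1 : ℝ) else 0) :=
        Finset.sum_comm
    _ ≤ ∑ k, w k * ((symmDiff (A k) T).card : ℝ) := by
        refine Finset.sum_le_sum fun k _ => ?_
        rw [← Finset.mul_sum]
        refine mul_le_mul_of_nonneg_left ?_ (hw0 k)
        calc (∑ i ∈ S, if i ∈ symmDiff (A k) T then (1 : ℝ) else 0)
            = ((S.filter (· ∈ symmDiff (A k) T)).card : ℝ) := by
              rw [Finset.sum_boole]
          _ ≤ ((symmDiff (A k) T).card : ℝ) := by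
              exact_mod_cast Finset.card_le_card
                (fun x hx => (Finset.mem_filter.mp hx).2)

/-- If `0 ≤ C`, `a * C ≤ Z` with `a > 0`, and `Z → 0` in probability, then `C → 0`
in probability. -/
lemma daggr_aux_squeeze {Ω : Type*} [MeasurableSpace Ω] (P : Measure Ω)
    (Z C : ℕ → Ω → ℝ) (a : ℝ) (ha : 0 < a)
    (hC0 : ∀ n ω, 0 ≤ C n ω)
    (hle : ∀ n ω, a * C n ω ≤ Z n ω)
    (hZ : TendstoInProb P Z 0) : TendstoInProb P C 0 := by
  intro ε hε
  have hsub : ∀ n, {ω | ε < |C n ω - 0|} ⊆ {ω | a * ε < |Z n ω - 0|} := by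
    intro n ω hω
    simp only [Set.mem_setOf_eq, sub_zero] at hω ⊢
    rw [abs_of_nonneg (hC0 n ω)] at hω
    calc a * ε < a * C n ω := (mul_lt_mul_iff_right₀ ha).mpr hω
      _ ≤ Z n ω := hle n ω
      _ ≤ |Z n ω| := le_abs_self _
  exact tendsto_of_tendsto_of_tendsto_of_le_of_le tendsto_const_nhds
    (hZ (a * ε) (by positivity)) (fun n => zero_le)
    (fun n => measure_mono (hsub n))

theorem daggr_strong_consistency_edge_selection
    {Ω : Type*} [MeasurableSpace Ω] (P : Measure Ω) [IsProbabilityMeasure P]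
    (p K : ℕ → ℕ) (hp : ∀ n, 1 ≤ p n) (hK : ∀ n, 1 ≤ K n)
    (w : (n : ℕ) → Fin (K n) → Ω → ℝ)
    (hw0 : ∀ n k ω, 0 ≤ w n k ω)
    (hw1 : ∀ n ω, ∑ k, w n k ω = 1)
    (hwmeas : ∀ n k, Measurable (w n k))
    (E : (n : ℕ) → Fin (K n) → Ω → Finset (Fin (p n) × Fin (p n)))
    (hEmeas : ∀ n k (e : Fin (p n) × Fin (p n)), MeasurableSet {ω | e ∈ E n k ω})
    (Estar : (n : ℕ) → Finset (Fin (p n) × Fin (p n)))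
    (hEstar : ∀ n, (Estar n).Nonempty)
    (c : ℝ) (hc0 : 0 < c) (hc1 : c < 1)
    (hstrong : TendstoInProb P (fun n ω =>
      ∑ k, w n k ω * ((symmDiff (E n k ω) (Estar n)).card : ℝ)) 0) :
    TendstoInProb P (fun n ω =>
      (((Estar n).filter fun e =>
          (∑ k, w n k ω * (if e ∈ E n k ω then (1 : ℝ) else 0)) ≤ c).card : ℝ)) 0 ∧
    TendstoInProb P (fun n ω =>
      (((Finset.univ \ Estar n).filter fun e =>
          c < ∑ k, w n k ω * (if e ∈ E n k ω then (1 : ℝ) else 0)).card : ℝ)) 0 := by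
  constructor
  · refine daggr_aux_squeeze P _ _ (1 - c) (by linarith) (fun n ω => by positivity) ?_ hstrong
    intro n ω
    refine daggr_aux_count (fun k => w n k ω) (fun k => hw0 n k ω)
      (fun k => E n k ω) (Estar n) _ _ ?_
    intro e he
    rw [Finset.mem_filter] at he
    obtain ⟨heE, hec⟩ := he
    have hterm : ∀ k, w n k ω * (1 - if e ∈ E n k ω then (1 : ℝ) else 0)
        ≤ w n k ω * (if e ∈ symmDiff (E n k ω) (Estar n) then (1 : ℝ) else 0) := by
      intro k
      by_cases h : e ∈ E n k ω
      · simp only [h, if_true, sub_self, mul_zero]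
        have := hw0 n k ω
        positivity
      · have hsd : e ∈ symmDiff (E n k ω) (Estar n) := by
          rw [Finset.mem_symmDiff]; exact Or.inr ⟨heE, h⟩
        simp [h, hsd]
    calc 1 - c ≤ 1 - ∑ k, w n k ω * (if e ∈ E n k ω then (1 : ℝ) else 0) := by linarith
      _ = ∑ k, w n k ω * (1 - if e ∈ E n k ω then (1 : ℝ) else 0) := by
          simp [mul_sub, Finset.sum_sub_distrib, hw1 n ω]
      _ ≤ _ := Finset.sum_le_sum (fun k _ => hterm k)
  · refine daggr_aux_squeeze P _ _ c hc0 (fun n ω => by positivity) ?_ hstrong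
    intro n ω
    refine daggr_aux_count (fun k => w n k ω) (fun k => hw0 n k ω)
      (fun k => E n k ω) (Estar n) _ _ ?_
    intro e he
    rw [Finset.mem_filter] at he
    obtain ⟨heE, hec⟩ := he
    rw [Finset.mem_sdiff] at heE
    have hterm : ∀ k, w n k ω * (if e ∈ E n k ω then (1 : ℝ) else 0)
        ≤ w n k ω * (if e ∈ symmDiff (E n k ω) (Estar n) then (1 : ℝ) else 0) := by
      intro k
      by_cases h : e ∈ E n k ω
      · have hsd : e ∈ symmDiff (E n k ω) (Estar n) := by
          rw [Finset.mem_symmDiff]; exact Or.inl ⟨h, heE.2⟩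
        simp [h, hsd]
      · simp only [h, if_false, mul_zero]
        have := hw0 n k ω
        positivity
    calc c ≤ ∑ k, w n k ω * (if e ∈ E n k ω then (1 : ℝ) else 0) := le_of_lt hec
      _ ≤ _ := Finset.sum_le_sum (fun k _ => hterm k)
end
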